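/- arXiv:1802.07219 — 3 statements merged into one kernel-verified Lean document; each statement's English description precedes it below -/
import Mathlib

section
/- Let L be a nonzero left Leibniz algebra. Then the Leibniz kernel Leib(L) is a proper subspace of L, i.e., Leib(L) ≠ L. -/
/-- For a nonzero left Leibniz algebra, the Leibniz kernel is a proper subspace. -/
theorem leibniz_kernel_proper
    (F : Type*) [Field F] (L : Type*) [AddCommGroup L] [Module F L]
    (mul : L →ₗ[F] L →ₗ[F] L)
    (leib : ∀ x y z : L, mul x (mul y z) = mul (mul x y) z + mul y (mul x z))
    (hnz : ∃ x : L, x ≠ 0) :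
    Submodule.span F {m : L | ∃ z : L, m = mul z z} ≠ ⊤ := by
  intro h
  obtain ⟨x, hx⟩ := hnz
  -- squares annihilate on the left
  have hsq : ∀ a z : L, mul (mul a a) z = 0 := by
    intro a z
    have := leib a a z
    have : mul (mul a a) z + mul a (mul a z) = mul a (mul a z) := this.symm
    exact add_right_cancel (by rw [this, zero_add])
  -- every element of the span annihilates on the left
  have hker : ∀ m z : L, mul m z = 0 := by
    intro m z
    have hle : Submodule.span F {m : L | ∃ z : L, m = mul z z} ≤
        LinearMap.ker (mul.flip z) := by
      rw [Submodule.span_le]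
      rintro _ ⟨a, rfl⟩
      simp [LinearMap.mem_ker, hsq a z]
    have : m ∈ LinearMap.ker (mul.flip z) := hle (h ▸ Submodule.mem_top)
    simpa using this
  -- hence all squares are zero, so span = ⊥
  have hset : {m : L | ∃ z : L, m = mul z z} ⊆ {0} := by
    rintro _ ⟨a, rfl⟩
    simp [hker a a]
  have hbot : Submodule.span F {m : L | ∃ z : L, m = mul z z} ≤ ⊥ := by
    calc Submodule.span F {m : L | ∃ z : L, m = mul z z}
        ≤ Submodule.span F ({0} : Set L) := Submodule.span_mono hset
      _ = ⊥ := Submodule.span_zero_singleton F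
  have : x ∈ (⊥ : Submodule F L) := hbot (h ▸ Submodule.mem_top)
  exact hx (Submodule.mem_bot F |>.mp this)
end

section
/- Every irreducible bimodule M over a left Leibniz algebra L is either symmetric (m·x = −x·m for all x, m) or anti-symmetric (m·x = 0 for all x, m). -/
/-- Every irreducible bimodule over a left Leibniz algebra is symmetric or
anti-symmetric. -/
theorem irreducible_bimodule_symmetric_or_antisymmetric
    (F : Type*) [Field F] (L : Type*) [AddCommGroup L] [Module F L]
    (M : Type*) [AddCommGroup M] [Module F M]
    (mul : L →ₗ[F] L →ₗ[F] L)
    (leib : ∀ x y z : L, mul x (mul y z) = mul (mul x y) z + mul y (mul x z))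
    (l : L →ₗ[F] M →ₗ[F] M) (r : L →ₗ[F] M →ₗ[F] M)
    (LLM : ∀ x y : L, ∀ m : M, l (mul x y) m = l x (l y m) - l y (l x m))
    (LML : ∀ x y : L, ∀ m : M, r y (l x m) = l x (r y m) - r (mul x y) m)
    (MLL : ∀ x y : L, ∀ m : M, r y (r x m) = r (mul x y) m - l x (r y m))
    (hM : ∃ m : M, m ≠ 0)
    (hirr : ∀ N : Submodule F M,
      (∀ x : L, ∀ m ∈ N, l x m ∈ N ∧ r x m ∈ N) → N = ⊥ ∨ N = ⊤) :
    (∀ x : L, ∀ m : M, r x m = - l x m) ∨ (∀ x : L, ∀ m : M, r x m = 0) := by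
  set S : Set M := {m | ∃ x n, m = l x n + r x n} with hS
  set N : Submodule F M := Submodule.span F S with hN
  -- r kills every generator
  have hr0 : ∀ y : L, ∀ s ∈ S, r y s = 0 := by
    rintro y s ⟨x, n, rfl⟩
    rw [map_add, LML, MLL]
    abel
  have hrN : ∀ y : L, ∀ m ∈ N, r y m = 0 := by
    intro y m hm
    induction hm using Submodule.span_induction with
    | mem s hs => exact hr0 y s hs
    | zero => simp
    | add a b _ _ ha hb => rw [map_add, ha, hb, add_zero]
    | smul c a _ ha => rw [map_smul, ha, smul_zero]
  have hclosed : ∀ x : L, ∀ m ∈ N, l x m ∈ N ∧ r x m ∈ N := by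
    intro y m hm
    refine ⟨?_, by rw [hrN y m hm]; exact N.zero_mem⟩
    induction hm using Submodule.span_induction with
    | mem s hs =>
      obtain ⟨x, n, rfl⟩ := hs
      have : l y (l x n + r x n)
          = (l (mul y x) n + r (mul y x) n) + (l x (l y n) + r x (l y n)) := by
        rw [map_add, LLM, LML]
        abel
      rw [this]
      exact N.add_mem (Submodule.subset_span ⟨_, _, rfl⟩)
        (Submodule.subset_span ⟨_, _, rfl⟩)
    | zero => simp
    | add a b _ _ ha hb => rw [map_add]; exact N.add_mem ha hb
    | smul c a _ ha => rw [map_smul]; exact N.smul_mem c ha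
  rcases hirr N hclosed with hbot | htop
  · left
    intro x m
    have : l x m + r x m ∈ N := Submodule.subset_span ⟨x, m, rfl⟩
    rw [hbot, Submodule.mem_bot] at this
    exact eq_neg_of_add_eq_zero_right this
  · right
    intro x m
    exact hrN x m (htop ▸ Submodule.mem_top)
end

section
/- Let (λ,ρ) be a representation of a left Leibniz algebra L on a vector space M. Then for every x ∈ L and every positive integer n, ρ_x^n = (−1)^{n−1} ρ_x ∘ λ_x^{n−1}. In particular, if λ_x is nilpotent then ρ_x is nilpotent. -/
/-- For a representation `(λ, ρ)` of a left Leibniz algebra on `M`: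
`ρ_x ^ n = (−1)^{n−1} ρ_x ∘ λ_x^{n−1}` for all `n ≥ 1`; in particular
nilpotency of `λ_x` implies nilpotency of `ρ_x`. -/
theorem rho_power_formula
    (F : Type*) [Field F] (L : Type*) [AddCommGroup L] [Module F L]
    (M : Type*) [AddCommGroup M] [Module F M]
    (mul : L →ₗ[F] L →ₗ[F] L)
    (leib : ∀ x y z : L, mul x (mul y z) = mul (mul x y) z + mul y (mul x z))
    (lam rho : L →ₗ[F] Module.End F M)
    (h1 : ∀ x y : L, lam (mul x y) = lam x * lam y - lam y * lam x)
    (h2 : ∀ x y : L, rho (mul x y) = lam x * rho y - rho y * lam x)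
    (h3 : ∀ x y : L, rho (mul x y) = rho y * rho x + lam x * rho y) :
    (∀ x : L, ∀ n : ℕ, 0 < n →
      rho x ^ n = (-1 : Module.End F M) ^ (n - 1) * (rho x * lam x ^ (n - 1))) ∧
    (∀ x : L, IsNilpotent (lam x) → IsNilpotent (rho x)) := by
  have key : ∀ x y : L, rho y * rho x = -(rho y * lam x) := by
    intro x y
    have h := (h2 x y).symm.trans (h3 x y)
    calc rho y * rho x = (rho y * rho x + lam x * rho y) - lam x * rho y := by abel
      _ = (lam x * rho y - rho y * lam x) - lam x * rho y := by rw [← h]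
      _ = -(rho y * lam x) := by abel
  have main : ∀ x : L, ∀ n : ℕ, 0 < n →
      rho x ^ n = (-1 : Module.End F M) ^ (n - 1) * (rho x * lam x ^ (n - 1)) := by
    intro x n hn
    induction n with
    | zero => exact absurd hn (by simp)
    | succ n ih =>
      rcases Nat.eq_zero_or_pos n with h0 | h0
      · subst h0; simp
      · obtain ⟨m, rfl⟩ := Nat.exists_eq_succ_of_ne_zero h0.ne'
        have hu : ∀ a : Module.End F M, a * (-1) ^ m = (-1) ^ m * a :=
          fun a => (((Commute.neg_one_left a).pow_left m).eq).symm
        calc rho x ^ (m + 1 + 1) = rho x * rho x ^ (m + 1) := by rw [pow_succ']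
          _ = rho x * ((-1) ^ m * (rho x * lam x ^ m)) := by
              rw [ih h0, Nat.succ_sub_one]
          _ = (-1) ^ m * ((rho x * rho x) * lam x ^ m) := by
              rw [← mul_assoc, hu, mul_assoc, mul_assoc]
          _ = (-1) ^ m * (-(rho x * lam x) * lam x ^ m) := by rw [key x x]
          _ = (-1) ^ (m + 1 + 1 - 1) * (rho x * lam x ^ (m + 1 + 1 - 1)) := by
              simp [pow_succ, mul_assoc, hu]
              rw [← pow_succ', pow_succ]
  refine ⟨main, fun x ⟨k, hk⟩ => ⟨k + 1, ?_⟩⟩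
  rw [main x (k + 1) (Nat.succ_pos k), Nat.succ_sub_one, hk]
  simp
end
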